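/- Assume φ : A → ℝ takes only nonnegative values and φ⁻¹({0}) ≠ ∅. Then φ is conserved by F if and only if for every shift-ergodic Borel probability measure μ on A^{ℤ^D}, ∫ φ(a(0)) dμ(a) = ∫ φ(F(a)(0)) dμ(a). -/

import Mathlib

open MeasureTheory

/-- The cellular automaton induced by a local rule `f` on neighbourhood `B`. -/
def induce {X A : Type*} [AddCommGroup X] (B : Finset X) (f : (B → A) → A)
    (a : X → A) : X → A :=
  fun x => f fun b => a (x + b.1)

/-- `ψ` is conserved by the CA induced by `f` on `B`. -/
def conserved {X A Z : Type*} [AddCommGroup X] [AddCommMonoid Z] (B : Finset X)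
    (f : (B → A) → A) (ψ : A → Z) : Prop :=
  (∃ a : A, ψ a = 0) ∧
  (∀ a : X → A, (Function.support fun x => ψ (a x)).Finite →
      (Function.support fun x => ψ (induce B f a x)).Finite) ∧
  (∀ a : X → A, (Function.support fun x => ψ (a x)).Finite →
      ∑ᶠ x, ψ (induce B f a x) = ∑ᶠ x, ψ (a x))

/-!
Write `F = induce B f`. If `φ` is conserved, then `f` sends vacuum neighbourhoods to the vacuum,
so replacing a configuration by the vacuum outside a finite window `Λ` changes its image under `F`
only near the boundary of `Λ`; conservation for the truncated configuration then bounds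
`|∑_{x ∈ Λ} (φ (F a x) - φ (a x))|` by an upper bound `M` of `φ` times the size of that
boundary. Averaging over a shift-invariant `μ` gives
`#Λ * |∫ φ (F a 0) dμ - ∫ φ (a 0) dμ| ≤ M * #∂Λ`, and for cubes `#∂Λ / #Λ → 0`.

Conversely, for a configuration `b` on a torus `(ℤ/m)^D`, the uniform measure on the shifts of its
periodic lift to `ℤ^D` is shift-invariant and ergodic, so the hypothesis says that the automaton
induced on every torus conserves `∑ φ`. A finitely supported configuration fits into a torus large
enough that nothing wraps around, which yields first the vacuum property and then conservation on
`ℤ^D`.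
-/

open Filter Topology Finset
open scoped ENNReal

lemma exists_extend_of_injOn {X G A : Type*} {π : X → G} {W : Finset X} (hπ : Set.InjOn π W)
    (p : W → A) (v : A) :
    ∃ b : G → A, (∀ x : W, b (π x) = p x) ∧ ∀ u, (∀ x ∈ W, π x ≠ u) → b u = v := by
  have hinj : Function.Injective fun x : W => π x := fun x y h => Subtype.ext (hπ x.2 y.2 h)
  refine ⟨Function.extend (fun x : W => π x) p fun _ => v, hinj.extend_apply p _, fun u hu => ?_⟩
  refine Function.extend_apply' _ _ _ ?_
  rintro ⟨x, rfl⟩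
  exact hu x x.2 rfl

lemma Finset.sum_univ_eq_sum_comp_of_injOn {X G M : Type*} [Fintype G] [AddCommMonoid M]
    {g : X → G} {s : Finset X} (hg : Set.InjOn g s) {ψ : G → M}
    (hψ : ∀ u, ψ u ≠ 0 → ∃ x ∈ s, g x = u) : ∑ u, ψ u = ∑ x ∈ s, ψ (g x) := by
  classical
  rw [← sum_image hg]
  refine (sum_subset (subset_univ _) fun u _ hu => ?_).symm
  by_contra h
  exact hu (mem_image.2 (hψ u h))

section Local

variable {X A : Type*} [AddCommGroup X] {B : Finset X} {f : (B → A) → A} {φ : A → ℝ}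

def VacuumPreserving (B : Finset X) (f : (B → A) → A) (φ : A → ℝ) : Prop :=
  ∀ p : B → A, (∀ β, φ (p β) = 0) → φ (f p) = 0

lemma VacuumPreserving.induce_eq_zero (hf : VacuumPreserving B f φ) {K W : Finset X}
    (hKW : ∀ x, ∀ β ∈ B, x + β ∈ K → x ∈ W) {a : X → A} (ha : ∀ y ∉ K, φ (a y) = 0)
    {x : X} (hx : x ∉ W) : φ (induce B f a x) = 0 :=
  hf _ fun β => ha _ fun h => hx (hKW x β β.2 h)

def shift (x : X) (a : X → A) : X → A := fun y => a (y + x)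

lemma shift_injective (x : X) : Function.Injective (shift (A := A) x) := fun a a' h => by
  funext y
  simpa [shift] using congrFun h (y - x)

lemma induce_shift_apply_zero (a : X → A) (x : X) : induce B f (shift x a) 0 = induce B f a x := by
  simp only [induce, shift, zero_add]
  exact congrArg f (funext fun β => congrArg a (add_comm _ _))

lemma conserved.vacuumPreserving (hc : conserved B f φ) (hpos : ∀ c, 0 ≤ φ c) :
    VacuumPreserving B f φ := by
  intro p hp
  obtain ⟨v, hv⟩ := hc.1
  obtain ⟨c, hcB, hcv⟩ := exists_extend_of_injOn (π := id) (Set.injOn_id _) p v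
  have hc0 : ∀ y, φ (c y) = 0 := by
    intro y
    by_cases hy : y ∈ B
    · rw [show c y = p ⟨y, hy⟩ from hcB ⟨y, hy⟩, hp]
    · rw [hcv y fun x hx h => hy (h ▸ hx), hv]
  have hfin : (Function.support fun y => φ (c y)).Finite := by simp [hc0]
  have hsum : ∑ᶠ x, φ (induce B f c x) = 0 := by simp [hc.2.2 c hfin, hc0]
  have hFfin := hc.2.1 c hfin
  rw [finsum_eq_sum_of_support_subset _ hFfin.coe_toFinset.symm.subset,
    sum_eq_zero_iff_of_nonneg fun x _ => hpos _] at hsum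
  have h0 : induce B f c 0 = f p := by
    simp only [induce, zero_add]
    exact congrArg f (funext hcB)
  rw [← h0]
  by_contra hne
  exact hne (hsum 0 (hFfin.mem_toFinset.2 hne))

lemma abs_sum_induce_sub_le [DecidableEq X] (hc : conserved B f φ) (hpos : ∀ c, 0 ≤ φ c) {M : ℝ}
    (hM : ∀ c, φ c ≤ M) {Λ₀ Λ Λ₁ : Finset X} (hΛ₀ : Λ₀ ⊆ Λ) (hΛ : Λ ⊆ Λ₁)
    (h₀ : ∀ x ∈ Λ₀, ∀ β ∈ B, x + β ∈ Λ) (h₁ : ∀ x, ∀ β ∈ B, x + β ∈ Λ → x ∈ Λ₁)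
    (a : X → A) : |∑ x ∈ Λ, (φ (induce B f a x) - φ (a x))| ≤ M * #(Λ₁ \ Λ₀) := by
  obtain ⟨v, hv⟩ := hc.1
  obtain ⟨a', ha'Λ, ha'v⟩ : ∃ a' : X → A, (∀ x ∈ Λ, a' x = a x) ∧ ∀ x ∉ Λ, a' x = v :=
    ⟨Λ.piecewise a fun _ => v, fun x hx => piecewise_eq_of_mem _ _ _ hx,
      fun x hx => piecewise_eq_of_notMem _ _ _ hx⟩
  have ha' : ∀ y ∉ Λ, φ (a' y) = 0 := fun y hy => by rw [ha'v y hy, hv]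
  have hsupp : (Function.support fun y => φ (a' y)) ⊆ Λ := fun y hy => by
    by_contra h; exact hy (ha' y h)
  have hFsupp : (Function.support fun y => φ (induce B f a' y)) ⊆ Λ₁ := fun y hy => by
    by_contra h; exact hy ((hc.vacuumPreserving hpos).induce_eq_zero h₁ ha' h)
  have hcons : ∑ x ∈ Λ₁, φ (induce B f a' x) = ∑ x ∈ Λ, φ (a x) := by
    rw [← finsum_eq_sum_of_support_subset _ hFsupp,
      hc.2.2 a' ((Λ.finite_toSet).subset hsupp), finsum_eq_sum_of_support_subset _ hsupp]
    exact sum_congr rfl fun x hx => by rw [ha'Λ x hx]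
  have hinner : ∑ x ∈ Λ₀, φ (induce B f a' x) = ∑ x ∈ Λ₀, φ (induce B f a x) :=
    sum_congr rfl fun x hx => congrArg (φ ∘ f) (funext fun β => ha'Λ _ (h₀ x hx β β.2))
  have hbound : ∀ s ⊆ Λ₁ \ Λ₀, ∀ c : X → A, ∑ x ∈ s, φ (c x) ≤ M * #(Λ₁ \ Λ₀) := by
    intro s hs c
    have hM0 : 0 ≤ M := (hpos v).trans (hM v)
    calc ∑ x ∈ s, φ (c x) ≤ #s • M := sum_le_card_nsmul _ _ _ fun x _ => hM _
      _ ≤ M * #(Λ₁ \ Λ₀) := by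
        rw [nsmul_eq_mul, mul_comm]
        exact mul_le_mul_of_nonneg_left (by exact_mod_cast card_le_card hs) hM0
  have hsplit : ∑ x ∈ Λ, (φ (induce B f a x) - φ (a x)) =
      ∑ x ∈ Λ \ Λ₀, φ (induce B f a x) - ∑ x ∈ Λ₁ \ Λ₀, φ (induce B f a' x) := by
    rw [sum_sub_distrib (fun x => φ (induce B f a x)) (fun x => φ (a x)), ← hcons,
      ← sum_sdiff hΛ₀, ← sum_sdiff (hΛ₀.trans hΛ), hinner]
    ring
  rw [hsplit]
  exact abs_sub_le_of_nonneg_of_le (sum_nonneg fun _ _ => hpos _)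
    (hbound _ (sdiff_subset_sdiff hΛ le_rfl) _) (sum_nonneg fun _ _ => hpos _)
    (hbound _ subset_rfl _)

end Local

section Shift

variable {X A : Type*} [AddCommGroup X] [MeasurableSpace A] {B : Finset X} {f : (B → A) → A}
  {φ : A → ℝ}

lemma measurable_shift (x : X) : Measurable (shift (A := A) x) :=
  measurable_pi_lambda _ fun y => measurable_pi_apply (y + x)

lemma measurable_induce_apply [DiscreteMeasurableSpace A] [Countable A] (x : X) :
    Measurable fun a : X → A => induce B f a x :=
  (measurable_of_countable f).comp (measurable_pi_lambda _ fun _ => measurable_pi_apply _)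

def ShiftInvariant (μ : Measure (X → A)) : Prop := ∀ x, μ.map (shift x) = μ

def ShiftErgodic (μ : Measure (X → A)) : Prop :=
  ∀ E : Set (X → A), MeasurableSet E → (∀ x, shift x '' E = E) → μ E = 0 ∨ μ E = 1

lemma ShiftInvariant.integral_comp_shift {μ : Measure (X → A)} (hμ : ShiftInvariant μ)
    {g : (X → A) → ℝ} (hg : AEStronglyMeasurable g μ) (x : X) :
    ∫ a, g (shift x a) ∂μ = ∫ a, g a ∂μ := by
  rw [← integral_map (measurable_shift x).aemeasurable ((hμ x).symm ▸ hg), hμ x]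

lemma card_mul_abs_integral_sub_le [DecidableEq X] [DiscreteMeasurableSpace A] [Countable A]
    (hc : conserved B f φ) (hpos : ∀ c, 0 ≤ φ c) {M : ℝ} (hM : ∀ c, φ c ≤ M)
    (μ : Measure (X → A)) [IsProbabilityMeasure μ] (hμ : ShiftInvariant μ)
    {Λ₀ Λ Λ₁ : Finset X} (hΛ₀ : Λ₀ ⊆ Λ) (hΛ : Λ ⊆ Λ₁)
    (h₀ : ∀ x ∈ Λ₀, ∀ β ∈ B, x + β ∈ Λ) (h₁ : ∀ x, ∀ β ∈ B, x + β ∈ Λ → x ∈ Λ₁) :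
    #Λ * |∫ a, φ (induce B f a 0) ∂μ - ∫ a, φ (a 0) ∂μ| ≤ M * #(Λ₁ \ Λ₀) := by
  have hφ : Measurable φ := .of_discrete
  have hbdd : ∀ c, ‖φ c‖ ≤ M := fun c => by
    rw [Real.norm_eq_abs, abs_of_nonneg (hpos c)]; exact hM c
  have hF : Integrable (fun a => φ (induce B f a 0)) μ :=
    .of_bound (hφ.comp (measurable_induce_apply 0)).aestronglyMeasurable M
      (ae_of_all _ fun _ => hbdd _)
  have ha : Integrable (fun a => φ (a 0)) μ :=
    .of_bound (hφ.comp (measurable_pi_apply 0)).aestronglyMeasurable M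
      (ae_of_all _ fun _ => hbdd _)
  set g : X → (X → A) → ℝ := fun x a => φ (induce B f a x) - φ (a x)
  have hg_shift : ∀ x, g x = g 0 ∘ shift x := fun x => funext fun a => by
    simp only [g, Function.comp_apply, induce_shift_apply_zero, shift, zero_add]
  have hint : ∀ x, Integrable (g x) μ := fun x => by
    rw [hg_shift x]
    exact ((hμ x).symm ▸ hF.sub ha).comp_measurable (measurable_shift x)
  have hintegral : ∀ x, ∫ a, g x a ∂μ = ∫ a, g 0 a ∂μ := fun x => by
    rw [hg_shift x]
    exact hμ.integral_comp_shift (hF.sub ha).aestronglyMeasurable x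
  calc #Λ * |∫ a, φ (induce B f a 0) ∂μ - ∫ a, φ (a 0) ∂μ|
      = |∫ a, ∑ x ∈ Λ, g x a ∂μ| := by
        rw [integral_finsetSum _ fun x _ => hint x, sum_congr rfl fun x _ => hintegral x,
          sum_const, nsmul_eq_mul, abs_mul, Nat.abs_cast, integral_sub hF ha]
    _ ≤ M * #(Λ₁ \ Λ₀) := by
        simpa only [probReal_univ, mul_one, Real.norm_eq_abs] using
          norm_integral_le_of_norm_le_const (μ := μ) (f := fun a => ∑ x ∈ Λ, g x a)
            (ae_of_all _ fun a => abs_sum_induce_sub_le hc hpos hM hΛ₀ hΛ h₀ h₁ a)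

end Shift

section Orbit

variable {X G A : Type*} [AddCommGroup X] [AddCommGroup G] [Fintype G] [MeasurableSpace A]

noncomputable def orbitMeasure (π : X →+ G) (b : G → A) : Measure (X → A) :=
  (Fintype.card G : ℝ≥0∞)⁻¹ • ∑ u, Measure.dirac fun y => b (π y + u)

variable (π : X →+ G) (b : G → A)

instance : IsProbabilityMeasure (orbitMeasure π b) := by
  constructor
  simp only [orbitMeasure, Measure.smul_apply, Measure.finsetSum_apply, measure_univ,
    sum_const, card_univ, nsmul_eq_mul, mul_one, smul_eq_mul]
  exact ENNReal.inv_mul_cancel (by simp) (by simp)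

lemma shiftInvariant_orbitMeasure : ShiftInvariant (orbitMeasure π b) := by
  intro x
  rw [orbitMeasure, Measure.map_smul, Measure.map_finset_sum' (measurable_shift x).aemeasurable]
  simp_rw [Measure.map_dirac' (measurable_shift x)]
  congr 1
  refine Fintype.sum_equiv (Equiv.addLeft (π x)) _ _ fun u => ?_
  congr 1
  funext y
  simp only [shift, map_add, Equiv.coe_addLeft, add_assoc]

lemma shiftErgodic_orbitMeasure (hπ : Function.Surjective π) :
    ShiftErgodic (orbitMeasure π b) := by
  intro E hE hinv
  have hmem : ∀ u, (fun y => b (π y + u)) ∈ E ↔ (fun y => b (π y)) ∈ E := by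
    intro u
    obtain ⟨x, rfl⟩ := hπ u
    have hx : (fun y => b (π y + π x)) = shift x fun y => b (π y) := by
      funext y; simp [shift]
    rw [hx]
    nth_rewrite 1 [← hinv x]
    exact (shift_injective x).mem_set_image
  have hdirac : ∀ u, Measure.dirac (fun y => b (π y + u)) E = Measure.dirac (fun y => b (π y)) E :=
    fun u => by
      classical simp only [Measure.dirac_apply' _ hE, Set.indicator_apply, hmem, Pi.one_apply]
  have hE_eq : orbitMeasure π b E = Measure.dirac (fun y => b (π y)) E := by
    simp only [orbitMeasure, Measure.smul_apply, Measure.finsetSum_apply, hdirac, sum_const,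
      card_univ, nsmul_eq_mul, smul_eq_mul, ← mul_assoc]
    rw [ENNReal.inv_mul_cancel (by simp) (by simp), one_mul]
  rw [hE_eq, Measure.dirac_apply' _ hE]
  by_cases h : (fun y => b (π y)) ∈ E <;> simp [h]

lemma integral_orbitMeasure {g : (X → A) → ℝ} (hg : StronglyMeasurable g) :
    ∫ a, g a ∂orbitMeasure π b = (Fintype.card G : ℝ)⁻¹ * ∑ u, g fun y => b (π y + u) := by
  rw [orbitMeasure, integral_smul_measure,
    integral_finsetSum_measure fun u _ => integrable_dirac' hg (by simp)]
  simp [integral_dirac' _ _ hg]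

end Orbit

def torusInduce {X G A : Type*} [AddCommGroup X] [AddCommGroup G] (π : X →+ G) (B : Finset X)
    (f : (B → A) → A) (b : G → A) (u : G) : A :=
  f fun β => b (u + π β)

section Torus

variable {X G A : Type*} [AddCommGroup X] [AddCommGroup G] [Fintype G] {B : Finset X}
  {f : (B → A) → A} {φ : A → ℝ} {v : A} (π : X →+ G)

lemma sum_torusInduce_eq [MeasurableSpace A] [DiscreteMeasurableSpace A] [Countable A]
    (h : ∀ μ : Measure (X → A), IsProbabilityMeasure μ → ShiftInvariant μ → ShiftErgodic μ →
      ∫ a, φ (a 0) ∂μ = ∫ a, φ (induce B f a 0) ∂μ)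
    (hπ : Function.Surjective π) (b : G → A) :
    ∑ u, φ (torusInduce π B f b u) = ∑ u, φ (b u) := by
  have hφ : Measurable φ := .of_discrete
  have key := h (orbitMeasure π b) inferInstance (shiftInvariant_orbitMeasure π b)
    (shiftErgodic_orbitMeasure π b hπ)
  rw [integral_orbitMeasure π b (g := fun a => φ (a 0))
      (hφ.comp (measurable_pi_apply 0)).stronglyMeasurable,
    integral_orbitMeasure π b (g := fun a => φ (induce B f a 0))
      (hφ.comp (measurable_induce_apply 0)).stronglyMeasurable] at key
  have hcard : (Fintype.card G : ℝ)⁻¹ ≠ 0 := by simp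
  simpa [induce, torusInduce, add_comm] using (mul_left_cancel₀ hcard key).symm

variable (hv : φ v = 0)
  (htorus : ∀ b : G → A, ∑ u, φ (torusInduce π B f b u) = ∑ u, φ (b u))
include hv htorus

lemma vacuumPreserving_of_sum_torusInduce_eq (hpos : ∀ c, 0 ≤ φ c) (hπ : Set.InjOn π B) :
    VacuumPreserving B f φ := by
  intro p hp
  obtain ⟨b, hbB, hbv⟩ := exists_extend_of_injOn hπ p v
  have hb : ∀ u, φ (b u) = 0 := by
    intro u
    by_cases hu : ∃ β ∈ B, π β = u
    · obtain ⟨β, hβ, rfl⟩ := hu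
      rw [show b (π β) = p ⟨β, hβ⟩ from hbB ⟨β, hβ⟩, hp]
    · push Not at hu
      rw [hbv u hu, hv]
  have hsum := htorus b
  simp only [hb, sum_const_zero] at hsum
  have h0 := (sum_eq_zero_iff_of_nonneg fun u _ => hpos _).1 hsum 0 (mem_univ _)
  simpa [torusInduce, hbB] using h0

lemma sum_induce_eq_of_sum_torusInduce_eq (hf : VacuumPreserving B f φ) {K W₁ W : Finset X}
    (hπ : Set.InjOn π W) (hKW : K ⊆ W) (hW₁W : W₁ ⊆ W) (hK : ∀ x, ∀ β ∈ B, x + β ∈ K → x ∈ W₁)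
    (hW₁ : ∀ x ∈ W₁, ∀ β ∈ B, x + β ∈ W) {a : X → A} (ha : ∀ x ∉ K, φ (a x) = 0) :
    ∑ x ∈ W₁, φ (induce B f a x) = ∑ x ∈ K, φ (a x) := by
  obtain ⟨b, hbW, hbv⟩ := exists_extend_of_injOn hπ (fun x => a x) v
  have hb : ∀ u, φ (b u) ≠ 0 → ∃ x ∈ K, π x = u := by
    intro u hu
    by_cases hu' : ∃ x ∈ W, π x = u
    · obtain ⟨x, hx, rfl⟩ := hu'
      rw [show b (π x) = a x from hbW ⟨x, hx⟩] at hu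
      exact ⟨x, by_contra fun h => hu (ha x h), rfl⟩
    · push Not at hu'
      exact absurd (by rw [hbv u hu', hv]) hu
  have hFb : ∀ x ∈ W₁, torusInduce π B f b (π x) = induce B f a x := fun x hx =>
    congrArg f (funext fun β => (congrArg b (map_add π x β).symm).trans (hbW ⟨_, hW₁ x hx β β.2⟩))
  have hFb_supp : ∀ u, φ (torusInduce π B f b u) ≠ 0 → ∃ x ∈ W₁, π x = u := by
    intro u hu
    obtain ⟨β, hβ⟩ : ∃ β : B, φ (b (u + π β)) ≠ 0 := by
      by_contra! h; exact hu (hf _ h)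
    obtain ⟨k, hk, hku⟩ := hb _ hβ
    exact ⟨k - β, hK _ β β.2 (by rwa [sub_add_cancel]), by rw [map_sub, hku, add_sub_cancel_right]⟩
  calc ∑ x ∈ W₁, φ (induce B f a x) = ∑ x ∈ W₁, φ (torusInduce π B f b (π x)) :=
        sum_congr rfl fun x hx => by rw [hFb x hx]
    _ = ∑ u, φ (b u) := by
        rw [← htorus, sum_univ_eq_sum_comp_of_injOn (hπ.mono hW₁W) hFb_supp]
    _ = ∑ x ∈ K, φ (a x) := by
        rw [sum_univ_eq_sum_comp_of_injOn (hπ.mono hKW) hb]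
        exact sum_congr rfl fun x hx => by rw [show b (π x) = a x from hbW ⟨x, hKW hx⟩]

end Torus

lemma tendsto_pow_add_sub_pow_sub_div_pow (c : ℝ) (D : ℕ) :
    Tendsto (fun N : ℝ => ((N + c) ^ D - (N - c) ^ D) / N ^ D) atTop (𝓝 0) := by
  have hc : Tendsto (fun N : ℝ => c / N) atTop (𝓝 0) := tendsto_const_nhds.div_atTop tendsto_id
  have hlim := (((tendsto_const_nhds (x := 1)).add hc).pow D).sub
    (((tendsto_const_nhds (x := 1)).sub hc).pow D)
  rw [add_zero, sub_zero, sub_self] at hlim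
  refine hlim.congr' ?_
  filter_upwards [eventually_gt_atTop 0] with N hN
  rw [sub_div, ← div_pow, ← div_pow, add_div, sub_div, div_self hN.ne']

lemma exists_forall_norm_le_nat {E : Type*} [SeminormedAddGroup E] {S : Set E} (hS : S.Finite) :
    ∃ r : ℕ, ∀ x ∈ S, ‖x‖ ≤ r := by
  obtain ⟨C, hC⟩ := isBounded_iff_forall_norm_le.1 hS.isBounded
  obtain ⟨r, hr⟩ := exists_nat_ge C
  exact ⟨r, fun x hx => (hC x hx).trans hr⟩

section Lattice

variable {D : ℕ}

noncomputable def cube (D n : ℕ) : Finset (Fin D → ℤ) := Fintype.piFinset fun _ => Icc (-n : ℤ) n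

lemma mem_cube_iff_abs_le {x : Fin D → ℤ} {n : ℕ} : x ∈ cube D n ↔ ∀ i, |x i| ≤ n := by
  simp only [cube, Fintype.mem_piFinset, mem_Icc, abs_le]

lemma mem_cube {x : Fin D → ℤ} {n : ℕ} : x ∈ cube D n ↔ ‖x‖ ≤ n := by
  rw [pi_norm_le_iff_of_nonneg n.cast_nonneg, mem_cube_iff_abs_le]
  simp only [Int.norm_eq_abs]
  norm_cast

lemma card_cube (D n : ℕ) : #(cube D n) = (2 * n + 1) ^ D := by
  simp only [cube, Fintype.card_piFinset, Int.card_Icc, prod_const, card_univ, Fintype.card_fin]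
  congr 1
  omega

lemma add_mem_cube {x β : Fin D → ℤ} {n s : ℕ} (hx : x ∈ cube D n) (hβ : ‖β‖ ≤ s) :
    x + β ∈ cube D (n + s) := by
  rw [mem_cube] at hx ⊢
  push_cast
  exact (norm_add_le x β).trans (add_le_add hx hβ)

lemma mem_cube_of_add_mem {x β : Fin D → ℤ} {n s : ℕ} (h : x + β ∈ cube D n) (hβ : ‖β‖ ≤ s) :
    x ∈ cube D (n + s) := by
  simpa using add_mem_cube h (norm_neg β ▸ hβ : ‖-β‖ ≤ s)

lemma cube_mono {n m : ℕ} (h : n ≤ m) : cube D n ⊆ cube D m := fun x hx =>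
  mem_cube.2 ((mem_cube.1 hx).trans (by exact_mod_cast h))

def torusProj (D m : ℕ) : (Fin D → ℤ) →+ (Fin D → ZMod m) :=
  (Int.castAddHom (ZMod m)).compLeft (Fin D)

lemma torusProj_surjective (m : ℕ) : Function.Surjective (torusProj D m) :=
  ZMod.intCast_surjective.comp_left

lemma injOn_torusProj_cube (n : ℕ) : Set.InjOn (torusProj D (2 * n + 1)) (cube D n) := by
  intro x hx y hy hxy
  funext i
  have hdvd : ((2 * n + 1 : ℕ) : ℤ) ∣ y i - x i :=
    (ZMod.intCast_eq_intCast_iff_dvd_sub _ _ _).1 (congrFun hxy i)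
  have hlt : |y i - x i| < ((2 * n + 1 : ℕ) : ℤ) := by
    have := (abs_sub _ _).trans
      (add_le_add (mem_cube_iff_abs_le.1 hy i) (mem_cube_iff_abs_le.1 hx i))
    push_cast
    linarith
  exact (sub_eq_zero.1 (Int.eq_zero_of_abs_lt_dvd hdvd hlt)).symm

end Lattice

theorem integral_eq_of_conserved {A : Type*} [Fintype A] [MeasurableSpace A]
    [DiscreteMeasurableSpace A] {D : ℕ} {B : Finset (Fin D → ℤ)} {f : (B → A) → A} {φ : A → ℝ}
    (hc : conserved B f φ) (hpos : ∀ c, 0 ≤ φ c) (μ : Measure ((Fin D → ℤ) → A))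
    [IsProbabilityMeasure μ] (hμ : ShiftInvariant μ) :
    ∫ a, φ (a 0) ∂μ = ∫ a, φ (induce B f a 0) ∂μ := by
  obtain ⟨s, hs⟩ := exists_forall_norm_le_nat B.finite_toSet
  set M := ∑ c, φ c
  have hM : ∀ c, φ c ≤ M := fun c => single_le_sum (fun c' _ => hpos c') (mem_univ c)
  set N : ℕ → ℝ := fun t => 2 * (t + s) + 1
  have key : ∀ t, |∫ a, φ (induce B f a 0) ∂μ - ∫ a, φ (a 0) ∂μ|
      ≤ M * (((N t + 2 * s) ^ D - (N t - 2 * s) ^ D) / N t ^ D) := by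
    intro t
    have h := card_mul_abs_integral_sub_le hc hpos hM μ hμ (Λ₀ := cube D t) (Λ := cube D (t + s))
      (Λ₁ := cube D (t + s + s)) (cube_mono (by omega)) (cube_mono (by omega))
      (fun x hx β hβ => add_mem_cube hx (hs β hβ)) (fun x β hβ h => mem_cube_of_add_mem h (hs β hβ))
    have hcard : ∀ n, (#(cube D n) : ℝ) = (2 * n + 1) ^ D := fun n => by
      rw [card_cube]; push_cast; ring
    rw [card_sdiff_of_subset (cube_mono (by omega)),
      Nat.cast_sub (card_le_card (cube_mono (by omega))), hcard, hcard, hcard] at h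
    rw [← mul_div_assoc, le_div_iff₀ (by positivity), mul_comm]
    convert h using 3 <;> first | rfl | (push_cast; ring)
  have hN : Tendsto N atTop atTop := tendsto_atTop_add_const_right _ _
    ((tendsto_natCast_atTop_atTop.atTop_add tendsto_const_nhds).const_mul_atTop two_pos)
  have hlim := ((tendsto_pow_add_sub_pow_sub_div_pow (2 * s) D).comp hN).const_mul M
  rw [mul_zero] at hlim
  exact (sub_eq_zero.1 (abs_nonpos_iff.1 (ge_of_tendsto' hlim key))).symm

theorem conserved_of_integral_eq {A : Type*} [Fintype A] [MeasurableSpace A]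
    [DiscreteMeasurableSpace A] {D : ℕ} {B : Finset (Fin D → ℤ)} {f : (B → A) → A} {φ : A → ℝ}
    (hpos : ∀ c, 0 ≤ φ c) (hvac : ∃ v, φ v = 0)
    (h : ∀ μ : Measure ((Fin D → ℤ) → A), IsProbabilityMeasure μ → ShiftInvariant μ →
      ShiftErgodic μ → ∫ a, φ (a 0) ∂μ = ∫ a, φ (induce B f a 0) ∂μ) :
    conserved B f φ := by
  obtain ⟨v, hv⟩ := hvac
  obtain ⟨s, hs⟩ := exists_forall_norm_le_nat B.finite_toSet
  have htorus (n : ℕ) := sum_torusInduce_eq (torusProj D (2 * n + 1)) h (torusProj_surjective _)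
  have hf : VacuumPreserving B f φ := vacuumPreserving_of_sum_torusInduce_eq _ hv (htorus s) hpos
    ((injOn_torusProj_cube s).mono fun β hβ => mem_cube.2 (hs β hβ))
  have key : ∀ a : (Fin D → ℤ) → A, (Function.support fun x => φ (a x)).Finite →
      ∃ W : Finset (Fin D → ℤ), (∀ x ∉ W, φ (induce B f a x) = 0) ∧
        ∑ x ∈ W, φ (induce B f a x) = ∑ᶠ x, φ (a x) := by
    intro a ha
    obtain ⟨r, hr⟩ := exists_forall_norm_le_nat ha
    have ha' : ∀ x ∉ cube D r, φ (a x) = 0 := fun x hx =>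
      by_contra fun h => hx (mem_cube.2 (hr x h))
    have hK : ∀ x, ∀ β ∈ B, x + β ∈ cube D r → x ∈ cube D (r + s) := fun x β hβ h =>
      mem_cube_of_add_mem h (hs β hβ)
    refine ⟨cube D (r + s), fun x hx => hf.induce_eq_zero hK ha' hx, ?_⟩
    rw [finsum_eq_sum_of_support_subset _ fun x hx => by_contra fun h => hx (ha' x h)]
    exact sum_induce_eq_of_sum_torusInduce_eq _ hv (htorus (r + s + s)) hf
      (injOn_torusProj_cube _) (cube_mono (by omega)) (cube_mono (by omega)) hK
      (fun x hx β hβ => add_mem_cube hx (hs β hβ)) ha'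
  refine ⟨⟨v, hv⟩, fun a ha => ?_, fun a ha => ?_⟩
  · obtain ⟨W, hW, -⟩ := key a ha
    exact W.finite_toSet.subset fun x hx => by_contra fun h => hx (hW x h)
  · obtain ⟨W, hW, hsum⟩ := key a ha
    rwa [finsum_eq_sum_of_support_subset _ fun x hx => by_contra fun h => hx (hW x h)]

theorem stmt8_general {A : Type*} [Fintype A]
    [MeasurableSpace A] [DiscreteMeasurableSpace A]
    {D : ℕ}
    (B : Finset (Fin D → ℤ))
    (f : (B → A) → A) (φ : A → ℝ)
    (hpos : ∀ a : A, 0 ≤ φ a) (hvac : ∃ a : A, φ a = 0) :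
    conserved B f φ ↔
      ∀ μ : Measure ((Fin D → ℤ) → A), IsProbabilityMeasure μ →
        (∀ x : Fin D → ℤ, Measure.map (fun a y => a (y + x)) μ = μ) →
        (∀ E : Set ((Fin D → ℤ) → A), MeasurableSet E →
          (∀ x : Fin D → ℤ, (fun (a : (Fin D → ℤ) → A) (y : Fin D → ℤ) => a (y + x)) '' E = E) →
          μ E = 0 ∨ μ E = 1) →
        ∫ a, φ (a 0) ∂μ = ∫ a, φ (induce B f a 0) ∂μ :=
  ⟨fun hc μ _ hμ _ => integral_eq_of_conserved hc hpos μ hμ,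
    fun h => conserved_of_integral_eq hpos hvac h⟩

theorem stmt8 {A : Type*} [Fintype A] [Nonempty A]
    [MeasurableSpace A] [DiscreteMeasurableSpace A]
    {D : ℕ} (hD : 1 ≤ D)
    (B : Finset (Fin D → ℤ)) (hB0 : (0 : Fin D → ℤ) ∈ B)
    (hBsym : ∀ b : Fin D → ℤ, b ∈ B ↔ -b ∈ B)
    (f : (B → A) → A) (φ : A → ℝ)
    (hpos : ∀ a : A, 0 ≤ φ a) (hvac : ∃ a : A, φ a = 0) :
    conserved B f φ ↔
      ∀ μ : Measure ((Fin D → ℤ) → A), IsProbabilityMeasure μ →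
        (∀ x : Fin D → ℤ, Measure.map (fun a y => a (y + x)) μ = μ) →
        (∀ E : Set ((Fin D → ℤ) → A), MeasurableSet E →
          (∀ x : Fin D → ℤ, (fun (a : (Fin D → ℤ) → A) (y : Fin D → ℤ) => a (y + x)) '' E = E) →
          μ E = 0 ∨ μ E = 1) →
        ∫ a, φ (a 0) ∂μ = ∫ a, φ (induce B f a 0) ∂μ :=
  stmt8_general B f φ hpos hvac
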